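/- Let N be a positive natural number, let Ω ⊆ ℝ^N be a measurable set of finite positive Lebesgue measure, let q, p be real numbers with 0 < q < 1 < p, and let λ > 0. Let k, h : ℝ^N → ℝ be essentially bounded on Ω with k ≥ 0 a.e. on Ω and essinf_{x∈Ω} h(x) > 0. Then there exists a real number m < 0 such that for every differentiable function u : ℝ^N → ℝ with ∫_Ω |∇u|² dx < ∞ and ∫_Ω |u|^{p+1} dx < ∞, the energy F_λ(u) := (1/2)·∫_Ω |∇u|² dx − (λ/(q+1))·∫_Ω k·|u|^{q+1} dx + (1/(p+1))·∫_Ω h·|u|^{p+1} dx satisfies F_λ(u) ≥ (1/2)·∫_Ω |∇u|² dx + m. In particular F_λ(u) → +∞ as ∫_Ω |∇u|² dx → ∞. -/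

import Mathlib

/-!
Since `q + 1 < p + 1`, the superlinear absorption term dominates the sublinear source term
pointwise: for `t ≥ 0` one has `a t^{q+1} ≤ b t^{p+1} + M` with `M` depending only on
`a, b, q, p`. Applied with `a = λ ‖k‖_∞ / (q+1)` and `b = essinf h / (p+1)` and integrated over
the finite-measure set `Ω`, this bounds the two lower-order terms of `F_λ(u)` below by
`-M |Ω|`, uniformly in `u`.
-/

open MeasureTheory Filter

theorem exists_mul_rpow_le_mul_rpow_add (a : ℝ) {b r s : ℝ} (hb : 0 < b) (hr : 0 ≤ r)
    (hrs : r < s) : ∃ M, ∀ t, 0 ≤ t → a * t ^ r ≤ b * t ^ s + M := by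
  set R := max 1 ((|a| / b) ^ (s - r)⁻¹)
  have hR : 0 ≤ R := zero_le_one.trans (le_max_left _ _)
  refine ⟨|a| * R ^ r, fun t ht => ?_⟩
  have hMt : a * t ^ r ≤ |a| * t ^ r :=
    mul_le_mul_of_nonneg_right (le_abs_self a) (Real.rpow_nonneg ht r)
  rcases le_total t R with htR | hRt
  · have : |a| * t ^ r ≤ |a| * R ^ r :=
      mul_le_mul_of_nonneg_left (Real.rpow_le_rpow ht htR hr) (abs_nonneg a)
    linarith [mul_nonneg hb.le (Real.rpow_nonneg ht s)]
  · have ht0 : 0 < t := zero_lt_one.trans_le ((le_max_left _ _).trans hRt)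
    have hab : |a| ≤ b * t ^ (s - r) := by
      rw [← div_le_iff₀' hb]
      calc |a| / b = ((|a| / b) ^ (s - r)⁻¹) ^ (s - r) :=
            (Real.rpow_inv_rpow (by positivity) (sub_pos.2 hrs).ne').symm
        _ ≤ t ^ (s - r) :=
            Real.rpow_le_rpow (by positivity) ((le_max_right _ _).trans hRt) (sub_pos.2 hrs).le
    have : |a| * t ^ r ≤ b * t ^ s :=
      calc |a| * t ^ r ≤ b * t ^ (s - r) * t ^ r :=
            mul_le_mul_of_nonneg_right hab (Real.rpow_nonneg ht r)
        _ = b * t ^ s := by rw [mul_assoc, ← Real.rpow_add ht0, sub_add_cancel]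
    linarith [mul_nonneg (abs_nonneg a) (Real.rpow_nonneg hR r)]

theorem MeasureTheory.MemLp.ae_essInf_le {α : Type*} [MeasurableSpace α] {μ : Measure α}
    {f : α → ℝ} (hf : MemLp f ⊤ μ) : ∀ᵐ x ∂μ, essInf f μ ≤ f x := by
  refine _root_.ae_essInf_le (isBoundedUnder_of_eventually_ge (a := -lpNorm f ⊤ μ) ?_)
  filter_upwards [ae_le_lpNorm_exponent_top hf] with x hx
  exact neg_le_of_abs_le hx

theorem MeasureTheory.MemLp.ae_le_lpNorm_top {α : Type*} [MeasurableSpace α] {μ : Measure α}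
    {f : α → ℝ} (hf : MemLp f ⊤ μ) : ∀ᵐ x ∂μ, f x ≤ lpNorm f ⊤ μ := by
  filter_upwards [ae_le_lpNorm_exponent_top hf] with x hx
  exact le_of_abs_le hx

theorem exists_integral_mul_rpow_le_integral_mul_rpow_add {α : Type*} [MeasurableSpace α]
    {μ : Measure α} [IsFiniteMeasure μ] {k h : α → ℝ} {r s K c : ℝ} (hr : 0 ≤ r) (hrs : r < s)
    (hc : 0 < c) (hk0 : ∀ᵐ x ∂μ, 0 ≤ k x) (hkK : ∀ᵐ x ∂μ, k x ≤ K) (hh : MemLp h ⊤ μ)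
    (hch : ∀ᵐ x ∂μ, c ≤ h x) :
    ∃ M, ∀ u : α → ℝ, Integrable (fun x => |u x| ^ s) μ →
      ∫ x, k x * |u x| ^ r ∂μ ≤ ∫ x, h x * |u x| ^ s ∂μ + M := by
  obtain ⟨M, hM⟩ := exists_mul_rpow_le_mul_rpow_add K hc hr hrs
  refine ⟨μ.real Set.univ * M, fun u hu => ?_⟩
  have hhu : Integrable (fun x => h x * |u x| ^ s) μ := hu.mul_of_top_right hh
  -- `k |u|^r` need not be known integrable: nonnegativity suffices for monotonicity.
  calc ∫ x, k x * |u x| ^ r ∂μ ≤ ∫ x, (h x * |u x| ^ s + M) ∂μ := by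
        refine integral_mono_of_nonneg ?_ (hhu.add (integrable_const M)) ?_
        · filter_upwards [hk0] with x hx
          exact mul_nonneg hx (Real.rpow_nonneg (abs_nonneg _) r)
        · filter_upwards [hkK, hch] with x hxK hxc
          have hu0 := abs_nonneg (u x)
          calc k x * |u x| ^ r ≤ K * |u x| ^ r :=
                mul_le_mul_of_nonneg_right hxK (Real.rpow_nonneg hu0 r)
            _ ≤ c * |u x| ^ s + M := hM _ hu0
            _ ≤ h x * |u x| ^ s + M := by
                gcongr
    _ = ∫ x, h x * |u x| ^ s ∂μ + μ.real Set.univ * M := by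
        rw [integral_add hhu (integrable_const M), integral_const, smul_eq_mul]

theorem stmt_10_general (N : ℕ) (Ω : Set (EuclideanSpace ℝ (Fin N)))
    (hΩfin : volume Ω < ⊤)
    (q p lam : ℝ) (hq0 : 0 < q) (hq1 : q < 1) (hp : 1 < p) (hlam : 0 < lam)
    (k h : EuclideanSpace ℝ (Fin N) → ℝ)
    (hkb : MemLp k ⊤ (volume.restrict Ω)) (hhb : MemLp h ⊤ (volume.restrict Ω))
    (hk0 : ∀ᵐ x ∂(volume.restrict Ω), 0 ≤ k x)
    (hhinf : 0 < essInf h (volume.restrict Ω)) :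
    ∃ m : ℝ, m < 0 ∧ ∀ u : EuclideanSpace ℝ (Fin N) → ℝ, Differentiable ℝ u →
      IntegrableOn (fun x => ‖fderiv ℝ u x‖ ^ 2) Ω volume →
      IntegrableOn (fun x => |u x| ^ (p + 1)) Ω volume →
      (1 / 2) * (∫ x in Ω, ‖fderiv ℝ u x‖ ^ 2)
          - (lam / (q + 1)) * (∫ x in Ω, k x * |u x| ^ (q + 1))
          + (1 / (p + 1)) * (∫ x in Ω, h x * |u x| ^ (p + 1)) ≥
        (1 / 2) * (∫ x in Ω, ‖fderiv ℝ u x‖ ^ 2) + m := by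
  have : IsFiniteMeasure (volume.restrict Ω) := isFiniteMeasure_restrict.2 hΩfin.ne
  have hlamq : 0 < lam / (q + 1) := by positivity
  have hp1 : 0 < 1 / (p + 1) := by positivity
  obtain ⟨M, hM⟩ := exists_integral_mul_rpow_le_integral_mul_rpow_add
    (k := fun x => lam / (q + 1) * k x) (h := fun x => 1 / (p + 1) * h x)
    (by linarith : 0 ≤ q + 1) (by linarith : q + 1 < p + 1) (mul_pos hp1 hhinf)
    (hk0.mono fun x hx => mul_nonneg hlamq.le hx)
    (hkb.ae_le_lpNorm_top.mono fun x hx => mul_le_mul_of_nonneg_left hx hlamq.le)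
    (hhb.const_mul _) (hhb.ae_essInf_le.mono fun x hx => mul_le_mul_of_nonneg_left hx hp1.le)
  refine ⟨-|M| - 1, by linarith [abs_nonneg M], fun u _ _ hup => ?_⟩
  have hu := hM u hup
  simp only [mul_assoc, integral_const_mul] at hu
  linarith [le_abs_self M]

/-- coercivity bound for the energy functional
`F_λ(u) = (1/2)∫|∇u|² − (λ/(q+1))∫ k|u|^{q+1} + (1/(p+1))∫ h|u|^{p+1}`:
there is `m < 0` with `F_λ(u) ≥ (1/2)∫|∇u|² + m` for every differentiable `u`
with `∫|∇u|² < ∞` and `∫|u|^{p+1} < ∞`. -/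
theorem stmt_10 (N : ℕ) (hN : 0 < N) (Ω : Set (EuclideanSpace ℝ (Fin N)))
    (hΩ : MeasurableSet Ω) (hΩfin : volume Ω < ⊤) (hΩpos : 0 < volume Ω)
    (q p lam : ℝ) (hq0 : 0 < q) (hq1 : q < 1) (hp : 1 < p) (hlam : 0 < lam)
    (k h : EuclideanSpace ℝ (Fin N) → ℝ)
    (hkb : MemLp k ⊤ (volume.restrict Ω)) (hhb : MemLp h ⊤ (volume.restrict Ω))
    (hk0 : ∀ᵐ x ∂(volume.restrict Ω), 0 ≤ k x)
    (hhinf : 0 < essInf h (volume.restrict Ω)) :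
    ∃ m : ℝ, m < 0 ∧ ∀ u : EuclideanSpace ℝ (Fin N) → ℝ, Differentiable ℝ u →
      IntegrableOn (fun x => ‖fderiv ℝ u x‖ ^ 2) Ω volume →
      IntegrableOn (fun x => |u x| ^ (p + 1)) Ω volume →
      (1 / 2) * (∫ x in Ω, ‖fderiv ℝ u x‖ ^ 2)
          - (lam / (q + 1)) * (∫ x in Ω, k x * |u x| ^ (q + 1))
          + (1 / (p + 1)) * (∫ x in Ω, h x * |u x| ^ (p + 1)) ≥
        (1 / 2) * (∫ x in Ω, ‖fderiv ℝ u x‖ ^ 2) + m :=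
  stmt_10_general N Ω hΩfin q p lam hq0 hq1 hp hlam k h hkb hhb hk0 hhinf
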